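/- Quadratic rate of asymptotic regularity in CAT(0)-spaces (constant λ): Let X be a CAT(0)-space, C ⊆ X nonempty convex bounded with diameter d_C, T : C → C nonexpansive with the approximate fixed point property on C, and λ ∈ (0,1). Then for every x ∈ C, every 0 < ε < 2d_C, and every n ≥ (1/(λ(1−λ)))·⌈8(d_C+1)²/ε²⌉, the iteration x_{n+1} = (1−λ)x_n ⊕ λ T x_n satisfies ρ(x_n, T x_n) ≤ ε. -/
import Mathlib


section Aux
variable {X : Type*} [MetricSpace X] (W : X → X → ℝ → X)

lemma aux_W0
    (W1 : ∀ x y z : X, ∀ l : ℝ, l ∈ Set.Icc (0:ℝ) 1 →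
      dist z (W x y l) ≤ (1 - l) * dist z x + l * dist z y)
    (x y : X) : W x y 0 = x := by
  have h := W1 x y x 0 ⟨le_refl 0, zero_le_one⟩
  simp at h
  exact h.symm

lemma aux_W1'
    (W1 : ∀ x y z : X, ∀ l : ℝ, l ∈ Set.Icc (0:ℝ) 1 →
      dist z (W x y l) ≤ (1 - l) * dist z x + l * dist z y)
    (x y : X) : W x y 1 = y := by
  have h := W1 x y y 1 ⟨zero_le_one, le_refl 1⟩
  simp at h
  exact h.symm

lemma aux_mid_unique
    (CN : ∀ x y z : X,
      dist z (W x y (1/2)) ^ 2 ≤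
        (1/2) * dist z x ^ 2 + (1/2) * dist z y ^ 2 - (1/4) * dist x y ^ 2)
    (u v m : X) (hu : dist m u = dist u v / 2) (hv : dist m v = dist u v / 2) :
    m = W u v (1/2) := by
  have h := CN u v m
  rw [hu, hv] at h
  have h0 : dist m (W u v (1/2)) ^ 2 ≤ 0 := by nlinarith
  have := sq_nonneg (dist m (W u v (1/2)))
  have : dist m (W u v (1/2)) = 0 := by nlinarith [dist_nonneg (x := m) (y := W u v (1/2))]
  exact dist_eq_zero.mp this

lemma aux_W_mid
    (W2 : ∀ x y : X, ∀ l l' : ℝ, l ∈ Set.Icc (0:ℝ) 1 → l' ∈ Set.Icc (0:ℝ) 1 →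
      dist (W x y l) (W x y l') = |l - l'| * dist x y)
    (CN : ∀ x y z : X,
      dist z (W x y (1/2)) ^ 2 ≤
        (1/2) * dist z x ^ 2 + (1/2) * dist z y ^ 2 - (1/4) * dist x y ^ 2)
    (x y : X) {a b : ℝ} (ha : a ∈ Set.Icc (0:ℝ) 1) (hb : b ∈ Set.Icc (0:ℝ) 1) :
    W x y ((a + b) / 2) = W (W x y a) (W x y b) (1/2) := by
  have hm : (a + b) / 2 ∈ Set.Icc (0:ℝ) 1 := by
    constructor <;> [linarith [ha.1, hb.1]; linarith [ha.2, hb.2]]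
  have huv : dist (W x y a) (W x y b) = |a - b| * dist x y := W2 x y a b ha hb
  apply aux_mid_unique W CN
  · rw [W2 x y ((a+b)/2) a hm ha, huv]
    rw [abs_sub_comm, show a - (a + b) / 2 = (a - b) / 2 by ring, abs_div, abs_two]
    ring
  · rw [W2 x y ((a+b)/2) b hm hb, huv]
    rw [show (a + b) / 2 - b = (a - b) / 2 by ring, abs_div, abs_two]
    ring

end Aux

section Aux2
variable {X : Type*} [MetricSpace X] (W : X → X → ℝ → X)

set_option maxHeartbeats 1000000 in
lemma aux_CNgen
    (W1 : ∀ x y z : X, ∀ l : ℝ, l ∈ Set.Icc (0:ℝ) 1 →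
      dist z (W x y l) ≤ (1 - l) * dist z x + l * dist z y)
    (W2 : ∀ x y : X, ∀ l l' : ℝ, l ∈ Set.Icc (0:ℝ) 1 → l' ∈ Set.Icc (0:ℝ) 1 →
      dist (W x y l) (W x y l') = |l - l'| * dist x y)
    (CN : ∀ x y z : X,
      dist z (W x y (1/2)) ^ 2 ≤
        (1/2) * dist z x ^ 2 + (1/2) * dist z y ^ 2 - (1/4) * dist x y ^ 2)
    (x y z : X) {t : ℝ} (ht : t ∈ Set.Icc (0:ℝ) 1) :
    dist z (W x y t) ^ 2 ≤
      (1 - t) * dist z x ^ 2 + t * dist z y ^ 2 - t * (1 - t) * dist x y ^ 2 := by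
  set A := dist z x ^ 2 with hA
  set B := dist z y ^ 2 with hB
  set D := dist x y with hD
  -- the midpoint step
  have mid : ∀ a b : ℝ, a ∈ Set.Icc (0:ℝ) 1 → b ∈ Set.Icc (0:ℝ) 1 →
      dist z (W x y a) ^ 2 ≤ (1 - a) * A + a * B - a * (1 - a) * D ^ 2 →
      dist z (W x y b) ^ 2 ≤ (1 - b) * A + b * B - b * (1 - b) * D ^ 2 →
      dist z (W x y ((a + b) / 2)) ^ 2 ≤
        (1 - (a + b) / 2) * A + ((a + b) / 2) * B
          - ((a + b) / 2) * (1 - (a + b) / 2) * D ^ 2 := by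
    intro a b ha hb hga hgb
    rw [aux_W_mid W W2 CN x y ha hb]
    have h := CN (W x y a) (W x y b) z
    have huv : dist (W x y a) (W x y b) = |a - b| * D := W2 x y a b ha hb
    have huv2 : dist (W x y a) (W x y b) ^ 2 = (a - b) ^ 2 * D ^ 2 := by
      rw [huv, mul_pow, sq_abs]
    nlinarith [h, huv2]
  -- dyadic values
  have dyadic : ∀ k : ℕ, ∀ i : ℕ, i ≤ 2 ^ k →
      dist z (W x y ((i : ℝ) / 2 ^ k)) ^ 2 ≤
        (1 - (i : ℝ) / 2 ^ k) * A + ((i : ℝ) / 2 ^ k) * B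
          - ((i : ℝ) / 2 ^ k) * (1 - (i : ℝ) / 2 ^ k) * D ^ 2 := by
    intro k
    induction k with
    | zero =>
      intro i hi
      interval_cases i
      · simp [aux_W0 W W1 x y, hA]
      · simp [aux_W1' W W1 x y, hB]
    | succ k ih =>
      intro i hi
      rcases Nat.even_or_odd i with ⟨j, hj⟩ | ⟨j, hj⟩
      · have hj' : j ≤ 2 ^ k := by omega
        have : (i : ℝ) / 2 ^ (k + 1) = (j : ℝ) / 2 ^ k := by
          subst hj; push_cast; ring
        rw [this]
        exact ih j hj'
      · have hj1 : j + 1 ≤ 2 ^ k := by omega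
        have hj' : j ≤ 2 ^ k := by omega
        have hmem : ∀ m : ℕ, m ≤ 2 ^ k → ((m : ℝ) / 2 ^ k) ∈ Set.Icc (0:ℝ) 1 := by
          intro m hm
          constructor
          · positivity
          · rw [div_le_one (by positivity)]
            exact_mod_cast hm
        have key := mid ((j : ℝ) / 2 ^ k) (((j : ℝ) + 1) / 2 ^ k)
          (hmem j hj') (by exact_mod_cast hmem (j + 1) hj1)
          (ih j hj') (by exact_mod_cast ih (j + 1) hj1)
        have heq : (i : ℝ) / 2 ^ (k + 1) = ((j : ℝ) / 2 ^ k + ((j : ℝ) + 1) / 2 ^ k) / 2 := by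
          subst hj; push_cast; field_simp; ring
        rw [heq]
        exact key
  -- approximation
  obtain ⟨ht0, ht1⟩ := ht
  have hDnn : 0 ≤ D := dist_nonneg
  have hAnn : 0 ≤ A := sq_nonneg _
  have hBnn : 0 ≤ B := sq_nonneg _
  set S := dist z x + dist z y with hS
  have hSnn : 0 ≤ S := by positivity
  set L : ℝ := 2 * S * D + 3 * D ^ 2 + A + B with hL
  have hLnn : 0 ≤ L := by positivity
  apply le_of_forall_pos_le_add
  intro ε hε
  obtain ⟨k, hk⟩ := exists_pow_lt_of_lt_one (show (0:ℝ) < ε / (L + 1) by positivity)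
    (show ((2:ℝ)⁻¹) < 1 by norm_num)
  set i : ℕ := ⌊t * 2 ^ k⌋₊ with hi_def
  have h2k : (0:ℝ) < 2 ^ k := by positivity
  have hik : i ≤ 2 ^ k := by
    have h : t * 2 ^ k ≤ ((2 ^ k : ℕ) : ℝ) := by push_cast; nlinarith
    calc i ≤ ⌊((2 ^ k : ℕ) : ℝ)⌋₊ := Nat.floor_mono h
    _ = 2 ^ k := Nat.floor_natCast _
  set q : ℝ := (i : ℝ) / 2 ^ k with hq_def
  have hq0 : 0 ≤ q := by positivity
  have hq1 : q ≤ 1 := by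
    rw [hq_def, div_le_one h2k]; exact_mod_cast hik
  have hqt : q ≤ t := by
    rw [hq_def, div_le_iff₀ h2k]
    exact Nat.floor_le (by positivity)
  set e : ℝ := t - q with he_def
  have he0 : 0 ≤ e := by simp only [he_def]; linarith
  have he1 : e ≤ (2⁻¹ : ℝ) ^ k := by
    have h1 : t * 2 ^ k < (i : ℝ) + 1 := Nat.lt_floor_add_one _
    have h2 : t < ((i : ℝ) + 1) / 2 ^ k := (lt_div_iff₀ h2k).mpr (by linarith)
    have h3 : ((i : ℝ) + 1) / 2 ^ k = (2⁻¹ : ℝ) ^ k + (i : ℝ) / 2 ^ k := by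
      rw [inv_pow]; field_simp; ring
    have h4 : e = t - (i : ℝ) / 2 ^ k := by rw [he_def, hq_def]
    linarith
  have heps : e * (L + 1) ≤ ε := by
    have h1 : e * (L + 1) ≤ (2⁻¹ : ℝ) ^ k * (L + 1) :=
      mul_le_mul_of_nonneg_right he1 (by positivity)
    have h2 : (2⁻¹ : ℝ) ^ k * (L + 1) < ε := by
      rw [← lt_div_iff₀ (show (0:ℝ) < L + 1 by positivity)]
      exact hk
    exact h1.trans h2.le
  have he_le1 : e ≤ 1 := by
    have h : (2⁻¹ : ℝ) ^ k ≤ 1 := pow_le_one₀ (by norm_num) (by norm_num)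
    linarith
  set d1 : ℝ := dist z (W x y t) with hd1_def
  set d2 : ℝ := dist z (W x y q) with hd2_def
  have hd1nn : 0 ≤ d1 := dist_nonneg
  have hd2nn : 0 ≤ d2 := dist_nonneg
  have hd12 : d1 ≤ d2 + e * D := by
    have htri : d1 ≤ d2 + dist (W x y q) (W x y t) := dist_triangle z (W x y q) (W x y t)
    have hW2 : dist (W x y q) (W x y t) = |q - t| * D :=
      W2 x y q t ⟨hq0, hq1⟩ ⟨ht0, ht1⟩
    have habs : |q - t| = e := by
      rw [abs_sub_comm, ← he_def, abs_of_nonneg he0]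
    rw [hW2, habs] at htri
    exact htri
  have hd2b : d2 ≤ S := by
    have h := W1 x y z q ⟨hq0, hq1⟩
    rw [hS]
    nlinarith [dist_nonneg (x := z) (y := x), dist_nonneg (x := z) (y := y)]
  have hd2sq : d2 ^ 2 ≤ (1 - q) * A + q * B - q * (1 - q) * D ^ 2 := dyadic k i hik
  have hd1sq : d1 ^ 2 ≤ (d2 + e * D) ^ 2 := pow_le_pow_left₀ hd1nn hd12 2
  have expand : (d2 + e * D) ^ 2 = d2 ^ 2 + 2 * d2 * (e * D) + e ^ 2 * D ^ 2 := by ring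
  rw [expand] at hd1sq
  have h3 : 2 * d2 * (e * D) ≤ 2 * S * (e * D) :=
    mul_le_mul_of_nonneg_right (by linarith) (mul_nonneg he0 hDnn)
  have h4 : e ^ 2 * D ^ 2 ≤ e * D ^ 2 :=
    mul_le_mul_of_nonneg_right (by nlinarith) (sq_nonneg D)
  have key : d1 ^ 2 ≤ (1 - q) * A + q * B - q * (1 - q) * D ^ 2 + 2 * S * (e * D) + e * D ^ 2 := by
    linarith
  have hte : t = q + e := by rw [he_def]; ring
  rw [hte]
  have h5a : 0 ≤ q * e * D ^ 2 := by positivity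
  have h5b : 0 ≤ e * e * D ^ 2 := by positivity
  have h6 : 0 ≤ e * B := mul_nonneg he0 hBnn
  have h7 : 0 ≤ e * D ^ 2 := by positivity
  have h8 : 0 ≤ e * A := mul_nonneg he0 hAnn
  have hexp : e * (L + 1) = 2 * S * (e * D) + 3 * (e * D ^ 2) + e * A + e * B + e := by
    rw [hL]; ring
  have hstep : 2 * S * (e * D) + 2 * (e * D ^ 2) + e * A
      ≤ e * B + 2 * (q * e * D ^ 2) + e * e * D ^ 2 + ε := by
    linarith [heps, h5a, h5b, h6, he0, h7]
  linarith [key, hstep]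
end Aux2

set_option maxHeartbeats 1000000 in


theorem stmt_17
    {X : Type*} [MetricSpace X]
    (W : X → X → ℝ → X)
    (W1 : ∀ x y z : X, ∀ l : ℝ, l ∈ Set.Icc (0:ℝ) 1 →
      dist z (W x y l) ≤ (1 - l) * dist z x + l * dist z y)
    (W2 : ∀ x y : X, ∀ l l' : ℝ, l ∈ Set.Icc (0:ℝ) 1 → l' ∈ Set.Icc (0:ℝ) 1 →
      dist (W x y l) (W x y l') = |l - l'| * dist x y)
    (W3 : ∀ x y : X, ∀ l : ℝ, l ∈ Set.Icc (0:ℝ) 1 → W x y l = W y x (1 - l))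
    (W4 : ∀ x y z w : X, ∀ l : ℝ, l ∈ Set.Icc (0:ℝ) 1 →
      dist (W x z l) (W y w l) ≤ (1 - l) * dist x y + l * dist z w)
    (CN : ∀ x y z : X,
      dist z (W x y (1/2)) ^ 2 ≤
        (1/2) * dist z x ^ 2 + (1/2) * dist z y ^ 2 - (1/4) * dist x y ^ 2)
    (C : Set X) (hCne : C.Nonempty)
    (hconv : ∀ u ∈ C, ∀ v ∈ C, ∀ l : ℝ, l ∈ Set.Icc (0:ℝ) 1 → W u v l ∈ C)
    (hCbd : Bornology.IsBounded C)
    (dC : ℝ) (hdC : Metric.diam C = dC)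
    (T : X → X) (hT : ∀ u ∈ C, T u ∈ C)
    (hTne : ∀ u ∈ C, ∀ v ∈ C, dist (T u) (T v) ≤ dist u v)
    (l : ℝ) (hl : l ∈ Set.Ioo (0:ℝ) 1)
    (x : X) (hx : x ∈ C)
    (xseq : ℕ → X) (hx0 : xseq 0 = x)
    (hxs : ∀ n, xseq (n + 1) = W (xseq n) (T (xseq n)) l)
    (happrox : ∀ δ : ℝ, 0 < δ → ∃ y ∈ C, dist y (T y) < δ)
    : ∀ ε : ℝ, 0 < ε → ε < 2 * dC →
      ∀ n : ℕ,
        (1 / (l * (1 - l))) * (⌈8 * (dC + 1) ^ 2 / ε ^ 2⌉₊ : ℝ) ≤ (n : ℝ) →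
        dist (xseq n) (T (xseq n)) ≤ ε := by
  intro ε hε hε2 n hn
  obtain ⟨hl0, hl1⟩ := hl
  have hlmem : l ∈ Set.Icc (0:ℝ) 1 := ⟨hl0.le, hl1.le⟩
  have hl1' : (0:ℝ) < 1 - l := by linarith
  have hc : 0 < l * (1 - l) := mul_pos hl0 hl1'
  have hxC : ∀ m, xseq m ∈ C := by
    intro m; induction m with
    | zero => rw [hx0]; exact hx
    | succ m ih => rw [hxs]; exact hconv _ ih _ (hT _ ih) l hlmem
  have hdC0 : 0 ≤ dC := hdC ▸ Metric.diam_nonneg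
  have hdle : ∀ u ∈ C, ∀ v ∈ C, dist u v ≤ dC := by
    intro u hu v hv; rw [← hdC]; exact Metric.dist_le_diam_of_mem hCbd hu hv
  -- the displacement is nonincreasing
  have hdec : ∀ m, dist (xseq (m+1)) (T (xseq (m+1))) ≤ dist (xseq m) (T (xseq m)) := by
    intro m
    have hW1e : W (xseq m) (T (xseq m)) 1 = T (xseq m) := aux_W1' W W1 _ _
    have hW0e : W (xseq m) (T (xseq m)) 0 = xseq m := aux_W0 W W1 _ _
    have h1 : dist (xseq (m+1)) (T (xseq m)) = (1 - l) * dist (xseq m) (T (xseq m)) := by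
      have h := W2 (xseq m) (T (xseq m)) l 1 hlmem ⟨zero_le_one, le_refl 1⟩
      rw [hW1e] at h
      rw [hxs, h, abs_sub_comm, abs_of_nonneg (by linarith)]
    have h2 : dist (xseq (m+1)) (xseq m) = l * dist (xseq m) (T (xseq m)) := by
      rw [hxs]
      have h := W2 (xseq m) (T (xseq m)) l 0 hlmem ⟨le_refl 0, zero_le_one⟩
      rw [hW0e] at h
      rw [h, sub_zero, abs_of_nonneg hl0.le]
    have h3 : dist (T (xseq (m+1))) (T (xseq m)) ≤ dist (xseq (m+1)) (xseq m) :=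
      hTne _ (hxC (m+1)) _ (hxC m)
    have h4 : dist (xseq (m+1)) (T (xseq (m+1)))
        ≤ dist (xseq (m+1)) (T (xseq m)) + dist (T (xseq m)) (T (xseq (m+1))) :=
      dist_triangle _ _ _
    rw [dist_comm (T (xseq m)) (T (xseq (m+1)))] at h4
    linarith
  have hmono : ∀ i j : ℕ, i ≤ j →
      dist (xseq j) (T (xseq j)) ≤ dist (xseq i) (T (xseq i)) := by
    intro i j hij
    induction j, hij using Nat.le_induction with
    | base => exact le_refl _
    | succ m hm ih => exact (hdec m).trans ih
  -- approximate fixed point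
  have hden : (0:ℝ) < 8 * (2*dC + 1) := by linarith
  set δ : ℝ := min 1 (ε^2 * (1 - l) / (8 * (2*dC + 1))) with hδdef
  have hδ0 : 0 < δ := lt_min one_pos (by positivity)
  have hδ1 : δ ≤ 1 := min_le_left _ _
  have hδ2 : δ ≤ ε^2 * (1 - l) / (8 * (2*dC + 1)) := min_le_right _ _
  obtain ⟨p, hpC, hpδ⟩ := happrox δ hδ0
  set c : ℝ := l * (2*δ*dC + δ^2) with hcdef
  -- key one-step inequality
  have hkey : ∀ m, l*(1-l) * dist (xseq m) (T (xseq m))^2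
      ≤ dist (xseq m) p^2 - dist (xseq (m+1)) p^2 + c := by
    intro m
    have hgen := aux_CNgen W W1 W2 CN (xseq m) (T (xseq m)) p hlmem
    rw [← hxs] at hgen
    have h1 : dist p (T (xseq m)) ≤ dist (xseq m) p + δ := by
      have ht1 : dist p (T (xseq m)) ≤ dist p (T p) + dist (T p) (T (xseq m)) :=
        dist_triangle _ _ _
      have ht2 : dist (T p) (T (xseq m)) ≤ dist p (xseq m) := hTne p hpC (xseq m) (hxC m)
      rw [dist_comm p (xseq m)] at ht2
      linarith [hpδ.le]
    have h2 : dist p (T (xseq m))^2 ≤ (dist (xseq m) p + δ)^2 :=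
      pow_le_pow_left₀ dist_nonneg h1 2
    have h3 : dist (xseq m) p ≤ dC := hdle _ (hxC m) _ hpC
    have h4 : dist p (T (xseq m))^2 ≤ dist (xseq m) p^2 + 2*δ*dC + δ^2 := by
      nlinarith [hδ0.le, dist_nonneg (x := xseq m) (y := p)]
    have h5 : l * dist p (T (xseq m))^2 ≤ l * (dist (xseq m) p^2 + 2*δ*dC + δ^2) :=
      mul_le_mul_of_nonneg_left h4 hl0.le
    rw [dist_comm p (xseq m), dist_comm p (xseq (m+1))] at hgen
    rw [hcdef]
    nlinarith [hgen, h5]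
  -- telescoping
  have hS : ∀ m : ℕ, ∑ i ∈ Finset.range m, l*(1-l)*dist (xseq i) (T (xseq i))^2
      ≤ dist (xseq 0) p^2 - dist (xseq m) p^2 + m * c := by
    intro m; induction m with
    | zero => simp
    | succ m ih =>
      rw [Finset.sum_range_succ]
      push_cast
      linarith [hkey m]
  have hlow : (n:ℝ) * (l*(1-l)*dist (xseq n) (T (xseq n))^2)
      ≤ ∑ i ∈ Finset.range n, l*(1-l)*dist (xseq i) (T (xseq i))^2 := by
    have hterm : ∀ i ∈ Finset.range n,
        l*(1-l)*dist (xseq n) (T (xseq n))^2 ≤ l*(1-l)*dist (xseq i) (T (xseq i))^2 := by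
      intro i hi
      have hle := hmono i n (Finset.mem_range.mp hi).le
      have hsq : dist (xseq n) (T (xseq n))^2 ≤ dist (xseq i) (T (xseq i))^2 :=
        pow_le_pow_left₀ dist_nonneg hle 2
      exact mul_le_mul_of_nonneg_left hsq hc.le
    calc (n:ℝ) * (l*(1-l)*dist (xseq n) (T (xseq n))^2)
        = ∑ _i ∈ Finset.range n, l*(1-l)*dist (xseq n) (T (xseq n))^2 := by
          rw [Finset.sum_const, Finset.card_range, nsmul_eq_mul]
    _ ≤ _ := Finset.sum_le_sum hterm
  have main := hlow.trans (hS n)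
  have hx0p2 : dist (xseq 0) p^2 ≤ dC^2 :=
    pow_le_pow_left₀ dist_nonneg (hdle _ (hxC 0) _ hpC) 2
  have hxnp2 : (0:ℝ) ≤ dist (xseq n) p^2 := sq_nonneg _
  -- numeric bounds
  set K : ℕ := ⌈8*(dC+1)^2/ε^2⌉₊ with hKdef
  have hK1 : (8*(dC+1)^2/ε^2 : ℝ) ≤ K := Nat.le_ceil _
  have hKn : (K:ℝ) ≤ (n:ℝ) * (l*(1-l)) := by
    have h := hn
    rw [one_div, inv_mul_eq_div, div_le_iff₀ hc] at h
    exact h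
  have hKpos : (0:ℝ) < K := lt_of_lt_of_le (by positivity) hK1
  have hn0 : (0:ℝ) < n := by nlinarith [hKn, hKpos, hc]
  have hε2pos : (0:ℝ) < ε^2 := by positivity
  have h8 : 8*(dC+1)^2 ≤ (K:ℝ) * ε^2 := by
    rw [div_le_iff₀ hε2pos] at hK1
    linarith
  have hdC2 : dC^2 ≤ (n:ℝ)*(l*(1-l))*(ε^2/8) := by
    have h1 : dC^2 ≤ (dC+1)^2 := by nlinarith
    have h2 : (K:ℝ)*(ε^2/8) ≤ (n:ℝ)*(l*(1-l))*(ε^2/8) :=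
      mul_le_mul_of_nonneg_right hKn (by positivity)
    nlinarith
  have hcb : c ≤ l * (ε^2*(1-l)/8) := by
    have hδsq : δ^2 ≤ δ := by nlinarith [hδ0.le]
    have hb1 : 2*δ*dC + δ^2 ≤ δ*(2*dC+1) := by nlinarith
    have hb2 : δ*(2*dC+1) ≤ ε^2*(1-l)/8 := by
      have h := mul_le_mul_of_nonneg_right hδ2 (by linarith : (0:ℝ) ≤ 2*dC+1)
      have heq : ε^2 * (1 - l) / (8 * (2*dC + 1)) * (2*dC+1) = ε^2*(1-l)/8 := by
        field_simp
      linarith [heq ▸ h]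
    rw [hcdef]
    have := mul_le_mul_of_nonneg_left (hb1.trans hb2) hl0.le
    linarith
  have hnc : (n:ℝ)*c ≤ (n:ℝ)*(l*(1-l))*(ε^2/8) := by
    have h := mul_le_mul_of_nonneg_left hcb hn0.le
    nlinarith
  have hfin : (n:ℝ)*(l*(1-l)) * dist (xseq n) (T (xseq n))^2
      ≤ (n:ℝ)*(l*(1-l))*(ε^2/4) := by
    nlinarith [main, hx0p2, hxnp2, hdC2, hnc]
  have hpos : (0:ℝ) < (n:ℝ)*(l*(1-l)) := mul_pos hn0 hc
  have hd2 : dist (xseq n) (T (xseq n))^2 ≤ ε^2/4 :=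
    le_of_mul_le_mul_left hfin hpos
  nlinarith [hd2, dist_nonneg (x := xseq n) (y := T (xseq n)), hε]
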